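/- arXiv:2406.02478 — 4 statements merged into one kernel-verified Lean document; each statement's English description precedes it below -/
import Mathlib

section
/- The centralizer algebra End_{S_n}(Sym^k(ℂⁿ)) is spanned by the elements T^λ_μ, as (λ, μ) ranges over pairs of length-k partitions with entries in {1,...,n}. -/
/-- Model of the symmetric power `Sym^k(ℂⁿ)`: the free ℂ-module on the basis
indexed by length-`k` partitions with entries in `{1,…,n}`, i.e. size-`k`
multisets from an `n`-element set (basis vector `v_λ = Pi.single λ 1`). -/
abbrev SymV (n k : ℕ) : Type := Sym (Fin n) k → ℂ

/-- The diagonal action of a permutation matrix `σ ∈ S_n ⊆ GL_n(ℂ)` on `Sym^k(ℂⁿ)`: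
the linear map sending the basis vector `v_λ` to `v_{σλ}`, where `σλ` is obtained by
applying `σ` entrywise (and sorting). -/
noncomputable def permAct (n k : ℕ) (σ : Equiv.Perm (Fin n)) : Module.End ℂ (SymV n k) :=
  LinearMap.funLeft ℂ ℂ (Sym.map ⇑σ⁻¹)

/-- The centralizer algebra `End_{S_n}(Sym^k(ℂⁿ))`. -/
noncomputable def centAlg (n k : ℕ) : Subalgebra ℂ (Module.End ℂ (SymV n k)) :=
  Subalgebra.centralizer ℂ (Set.range (permAct n k))

/-- The matrix unit `E^ν_γ` sending the basis vector `v_ν` to `v_γ` and every other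
basis vector to `0`. -/
noncomputable def Eunit (n k : ℕ) (nu ga : Sym (Fin n) k) : Module.End ℂ (SymV n k) :=
  (LinearMap.proj nu).smulRight (Pi.single ga 1)

open scoped Classical in
/-- `T^λ_μ`, the sum of the matrix units `E^ν_γ` over all pairs `(ν, γ)` for which
there exists `ρ ∈ S_n` with `λ = ρν` and `μ = ργ`. -/
noncomputable def Tmap (n k : ℕ) (lam mu : Sym (Fin n) k) : Module.End ℂ (SymV n k) :=
  ∑ p : Sym (Fin n) k × Sym (Fin n) k,
    if ∃ ρ : Equiv.Perm (Fin n), lam = Sym.map ρ p.1 ∧ mu = Sym.map ρ p.2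
    then Eunit n k p.1 p.2 else 0

/-! Write an endomorphism of `Sym^k(ℂⁿ)` through its coefficients `entry (ν, γ)` in the basis
`v_λ`. Commuting with every permutation `σ ∈ S_n` says exactly that these coefficients are constant
on the `S_n`-orbits of pairs `(ν, γ)`. The coefficients of `T^λ_μ` are the indicator of the orbit
of `(λ, μ)`, so `T^λ_μ` lies in the centralizer; conversely an endomorphism with orbit-constant
coefficients `c` is `∑_O c_O T_O`, summed over the orbits `O`. -/

instance Sym.instMulActionPerm {α : Type*} {k : ℕ} : MulAction (Equiv.Perm α) (Sym α k) where
  smul σ s := s.map σ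
  one_smul := Sym.map_id'
  mul_smul σ τ s := (Sym.map_map σ τ s).symm

lemma Sym.perm_smul_def {α : Type*} {k : ℕ} (σ : Equiv.Perm α) (s : Sym α k) :
    σ • s = s.map σ := rfl

open MulAction

section entry

variable {ι K : Type*} [DecidableEq ι] [CommSemiring K]

def entry (p : ι × ι) : Module.End K (ι → K) →ₗ[K] K :=
  (LinearMap.proj p.2).comp (LinearMap.applyₗ (Pi.single p.1 1))

lemma entry_apply (p : ι × ι) (f : Module.End K (ι → K)) :
    entry p f = f (Pi.single p.1 1) p.2 := rfl

lemma entry_ext [Fintype ι] {f g : Module.End K (ι → K)} (h : ∀ p, entry p f = entry p g) :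
    f = g := by
  refine LinearMap.pi_ext fun ν x => funext fun γ => ?_
  rw [← mul_one x, ← smul_eq_mul, Pi.single_smul', map_smul, map_smul, Pi.smul_apply,
    Pi.smul_apply]
  exact congrArg (x • ·) (h (ν, γ))

end entry

variable {n k : ℕ}

lemma permAct_single (σ : Equiv.Perm (Fin n)) (ν : Sym (Fin n) k) :
    permAct n k σ (Pi.single ν 1) = Pi.single (σ • ν) 1 := by
  ext γ
  simp only [permAct, LinearMap.funLeft_apply, Pi.single_apply]
  exact if_congr (by rw [← Sym.perm_smul_def, inv_smul_eq_iff]) rfl rfl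

lemma entry_permAct_mul (σ : Equiv.Perm (Fin n)) (f : Module.End ℂ (SymV n k))
    (ν γ : Sym (Fin n) k) : entry (ν, γ) (permAct n k σ * f) = entry (ν, σ⁻¹ • γ) f := rfl

lemma entry_mul_permAct (σ : Equiv.Perm (Fin n)) (f : Module.End ℂ (SymV n k))
    (ν γ : Sym (Fin n) k) : entry (ν, γ) (f * permAct n k σ) = entry (σ • ν, γ) f := by
  rw [entry_apply, Module.End.mul_apply, permAct_single, entry_apply]

lemma mem_centAlg_iff {f : Module.End ℂ (SymV n k)} :
    f ∈ centAlg n k ↔ ∀ (σ : Equiv.Perm (Fin n)) p, entry (σ • p) f = entry p f := by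
  simp only [centAlg, Subalgebra.mem_centralizer_iff, Set.forall_mem_range]
  refine forall_congr' fun σ => ⟨fun h ⟨ν, γ⟩ => ?_, fun h => entry_ext fun ⟨ν, γ⟩ => ?_⟩
  · have := congrArg (entry (ν, σ • γ)) h
    rwa [entry_permAct_mul, entry_mul_permAct, inv_smul_smul, eq_comm] at this
  · rw [entry_permAct_mul, entry_mul_permAct, ← h, Prod.smul_mk, smul_inv_smul]

lemma entry_Eunit (ν γ : Sym (Fin n) k) (p : Sym (Fin n) k × Sym (Fin n) k) :
    entry p (Eunit n k ν γ) = if p = (ν, γ) then 1 else 0 := by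
  obtain ⟨a, b⟩ := p
  simp only [entry_apply, Eunit, LinearMap.smulRight_apply, LinearMap.proj_apply, Pi.smul_apply,
    Pi.single_apply, Prod.mk.injEq, smul_eq_mul, mul_ite, mul_one, mul_zero, ite_and]
  by_cases ha : ν = a <;> simp [ha, eq_comm]

open scoped Classical in
lemma entry_Tmap (lam mu : Sym (Fin n) k) (p : Sym (Fin n) k × Sym (Fin n) k) :
    entry p (Tmap n k lam mu) =
      if (⟦p⟧ : orbitRel.Quotient (Equiv.Perm (Fin n)) _) = ⟦(lam, mu)⟧ then 1 else 0 := by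
  have hp : (⟦p⟧ : orbitRel.Quotient (Equiv.Perm (Fin n)) _) = ⟦(lam, mu)⟧ ↔
      ∃ ρ : Equiv.Perm (Fin n), lam = Sym.map ρ p.1 ∧ mu = Sym.map ρ p.2 := by
    rw [Quotient.eq, orbitRel_apply, mem_orbit_symm, mem_orbit_iff]
    simp [Prod.ext_iff, Sym.perm_smul_def, eq_comm]
  rw [Tmap, map_sum, Fintype.sum_eq_single p fun q hq => by
      rw [apply_ite (entry p), entry_Eunit, if_neg hq.symm, map_zero, ite_self],
    apply_ite (entry p), entry_Eunit, if_pos rfl, map_zero]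
  exact if_congr hp.symm rfl rfl

lemma Tmap_mem_centAlg (lam mu : Sym (Fin n) k) : Tmap n k lam mu ∈ centAlg n k := by
  refine mem_centAlg_iff.2 fun σ p => ?_
  rw [entry_Tmap, entry_Tmap, orbitRel.Quotient.quotient_smul_eq]

open scoped Classical in
lemma eq_sum_smul_Tmap_of_mem_centAlg {f : Module.End ℂ (SymV n k)} (hf : f ∈ centAlg n k) :
    f = ∑ o : orbitRel.Quotient (Equiv.Perm (Fin n)) (Sym (Fin n) k × Sym (Fin n) k),
      entry o.out f • Tmap n k o.out.1 o.out.2 := by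
  refine entry_ext fun p => ?_
  obtain ⟨σ, hσ⟩ := mem_orbit_iff.1 <| orbitRel_apply.1 <|
    Quotient.mk_out (s := orbitRel (Equiv.Perm (Fin n)) _) p
  simp [map_sum, entry_Tmap, ← hσ, mem_centAlg_iff.1 hf]

/-- The centralizer algebra `End_{S_n}(Sym^k(ℂⁿ))` is spanned by the elements
`T^λ_μ` as `(λ, μ)` ranges over pairs of length-`k` partitions with entries in
`{1,…,n}`. -/
theorem centAlg_eq_span_Tmap (n k : ℕ) :
    (centAlg n k : Set (Module.End ℂ (SymV n k)))
      = ↑(Submodule.span ℂ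
          (Set.range fun p : Sym (Fin n) k × Sym (Fin n) k => Tmap n k p.1 p.2)) := by
  ext f
  refine ⟨fun hf => ?_, fun hf => ?_⟩
  · rw [eq_sum_smul_Tmap_of_mem_centAlg hf]
    exact Submodule.sum_mem _ fun o _ =>
      Submodule.smul_mem _ _ (Submodule.subset_span ⟨o.out, rfl⟩)
  · have hspan : Submodule.span ℂ (Set.range fun p : Sym (Fin n) k × Sym (Fin n) k =>
        Tmap n k p.1 p.2) ≤ Subalgebra.toSubmodule (centAlg n k) :=
      Submodule.span_le.2 <| Set.range_subset_iff.2 fun p => Tmap_mem_centAlg p.1 p.2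
    exact hspan hf
end

section
/- Let k ≥ 1 and n ≥ 2k. The number of orbits of the S_n-action σ·(a,b) = (sort σa, sort σb) on pairs of length-k tuples with entries in {1,...,n} (each tuple considered up to reordering, i.e., as a multiset of size k) equals the number of ◊-classes of set-partitions of {1,...,k} ⊔ {1',...,k'}, where ◊ relabels unprimed and primed elements by independent permutations in S_k. -/
def lozenge (k : ℕ) (S T : Setoid (Fin k ⊕ Fin k)) : Prop :=
  ∃ α β : Equiv.Perm (Fin k),
    ∀ x y : Fin k ⊕ Fin k, S.r x y ↔ T.r (Sum.map α β x) (Sum.map α β y)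

def pairRel (n k : ℕ) (p q : Sym (Fin n) k × Sym (Fin n) k) : Prop :=
  ∃ σ : Equiv.Perm (Fin n), p.1 = Sym.map σ q.1 ∧ p.2 = Sym.map σ q.2

/-- If two tuples valued in a linear order have the same multiset of values,
they differ by a permutation of the index set. -/
lemma exists_comp_perm_of_map_univ_eq {α : Type*} [LinearOrder α] {k : ℕ} {f g : Fin k → α}
    (h : Multiset.map f Finset.univ.val = Multiset.map g Finset.univ.val) :
    ∃ e : Equiv.Perm (Fin k), f = g ∘ e := by
  have hp : (List.ofFn f).Perm (List.ofFn g) := by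
    rw [← Multiset.coe_eq_coe, ← Fin.univ_val_map, ← Fin.univ_val_map]
    exact h
  have hsorted : (f ∘ Tuple.sort f) = (g ∘ Tuple.sort g) := by
    have hperm : (List.ofFn (f ∘ Tuple.sort f)).Perm (List.ofFn (g ∘ Tuple.sort g)) :=
      ((Equiv.Perm.ofFn_comp_perm _ f).trans hp).trans (Equiv.Perm.ofFn_comp_perm _ g).symm
    have := List.Perm.eq_of_sortedLE
      (List.sortedLE_ofFn_iff.mpr (Tuple.monotone_sort f)) (List.sortedLE_ofFn_iff.mpr (Tuple.monotone_sort g)) hperm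
    rwa [List.ofFn_inj] at this
  refine ⟨(Tuple.sort f).symm.trans (Tuple.sort g), ?_⟩
  funext i
  have := congrFun hsorted ((Tuple.sort f).symm i)
  simpa using this

/-- Two functions into a finite type with the same kernel differ by a
permutation of the codomain. -/
lemma exists_perm_comp_of_ker {ι α : Type*} [Fintype ι] [Fintype α] [DecidableEq α]
    (h h' : ι → α) (hker : ∀ x y, h x = h y ↔ h' x = h' y) :
    ∃ σ : Equiv.Perm α, h = σ ∘ h' := by
  classical
  set s : Finset α := Finset.image h' Finset.univ with hs
  set t : Finset α := Finset.image h Finset.univ with ht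
  have hmem : ∀ x : {x // x ∈ s}, ∃ w : ι, h' w = (x : α) := by
    rintro ⟨x, hx⟩
    obtain ⟨w, -, hw⟩ := Finset.mem_image.mp hx
    exact ⟨w, hw⟩
  choose w hw using hmem
  set F : {x // x ∈ s} → {x // x ∈ t} :=
    fun x => ⟨h (w x), Finset.mem_image_of_mem _ (Finset.mem_univ _)⟩ with hF
  have hFbij : Function.Bijective F := by
    constructor
    · rintro x x' hxx'
      have : h (w x) = h (w x') := congrArg Subtype.val hxx'
      rw [hker] at this
      exact Subtype.ext (by rw [← hw x, ← hw x', this])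
    · rintro ⟨y, hy⟩
      obtain ⟨v, -, hv⟩ := Finset.mem_image.mp hy
      refine ⟨⟨h' v, Finset.mem_image_of_mem _ (Finset.mem_univ _)⟩, ?_⟩
      apply Subtype.ext
      have h1 : h' (w ⟨h' v, _⟩) = h' v := hw ⟨h' v, Finset.mem_image_of_mem _ (Finset.mem_univ _)⟩
      have : h (w ⟨h' v, Finset.mem_image_of_mem _ (Finset.mem_univ _)⟩) = h v :=
        (hker _ _).mpr h1
      simpa [hF, this] using hv
  set e : {x // x ∈ s} ≃ {x // x ∈ t} := Equiv.ofBijective F hFbij with he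
  have hcard : Fintype.card {x // ¬ x ∈ s} = Fintype.card {x // ¬ x ∈ t} := by
    rw [Fintype.card_subtype_compl, Fintype.card_subtype_compl, Fintype.card_congr e]
  set e' : {x // ¬ x ∈ s} ≃ {x // ¬ x ∈ t} := Fintype.equivOfCardEq hcard with he'
  refine ⟨Equiv.subtypeCongr e e', ?_⟩
  funext v
  have hv : h' v ∈ s := Finset.mem_image_of_mem _ (Finset.mem_univ _)
  have : Equiv.subtypeCongr e e' (h' v) = (e ⟨h' v, hv⟩ : α) := by
    unfold Equiv.subtypeCongr
    rw [Equiv.trans_apply, Equiv.sumCompl_symm_apply_of_pos hv, Equiv.trans_apply,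
      Equiv.sumCongr_apply, Sum.map_inl, Equiv.sumCompl_apply_inl]
  rw [Function.comp_apply, this]
  have h1 : h' (w ⟨h' v, hv⟩) = h' v := hw _
  exact ((hker _ _).mpr h1).symm

/-- A representative tuple of a symmetric power element. -/
noncomputable def symFun {n k : ℕ} (s : Sym (Fin n) k) : Fin k → Fin n :=
  fun i => s.1.toList.get (Fin.cast (by rw [Multiset.length_toList, s.2]) i)

lemma map_univ_symFun {n k : ℕ} (s : Sym (Fin n) k) :
    Multiset.map (symFun s) Finset.univ.val = (s : Multiset (Fin n)) := by
  rw [Fin.univ_val_map]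
  have hlen : s.1.toList.length = k := by rw [Multiset.length_toList, s.2]
  have : List.ofFn (symFun s) = s.1.toList := by
    apply List.ext_get (by simp [hlen])
    intro i h1 h2
    simp [symFun, List.get_ofFn]
    rfl
  rw [this, Multiset.coe_toList]
  rfl

/-- The setoid (partition of `[k] ⊔ [k]`) attached to a pair of multisets. -/
noncomputable def pairToSetoid {n k : ℕ} (p : Sym (Fin n) k × Sym (Fin n) k) :
    Setoid (Fin k ⊕ Fin k) :=
  Setoid.ker (Sum.elim (symFun p.1) (symFun p.2))

lemma pairToSetoid_r {n k : ℕ} (p : Sym (Fin n) k × Sym (Fin n) k) (x y : Fin k ⊕ Fin k) :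
    (pairToSetoid p).r x y ↔
      Sum.elim (symFun p.1) (symFun p.2) x = Sum.elim (symFun p.1) (symFun p.2) y :=
  Iff.rfl

lemma lozenge_equivalence (k : ℕ) : Equivalence (lozenge k) := by
  constructor
  · intro S
    exact ⟨1, 1, fun x y => by cases x <;> cases y <;> simp⟩
  · rintro S T ⟨α, β, hab⟩
    refine ⟨α⁻¹, β⁻¹, fun x y => ?_⟩
    have hx : Sum.map (⇑α) (⇑β) (Sum.map (⇑α⁻¹) (⇑β⁻¹) x) = x := by cases x <;> simp
    have hy : Sum.map (⇑α) (⇑β) (Sum.map (⇑α⁻¹) (⇑β⁻¹) y) = y := by cases y <;> simp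
    refine ⟨fun hT => (hab _ _).mpr ?_, fun hS => ?_⟩
    · rw [hx, hy]; exact hT
    · have := (hab _ _).mp hS; rwa [hx, hy] at this
  · rintro S T U ⟨α, β, hab⟩ ⟨α', β', hab'⟩
    refine ⟨α.trans α', β.trans β', fun x y => ?_⟩
    rw [hab, hab']
    have hx : ∀ z : Fin k ⊕ Fin k, Sum.map (⇑α') (⇑β') (Sum.map (⇑α) (⇑β) z) =
        Sum.map (⇑(α.trans α')) (⇑(β.trans β')) z := by
      intro z; cases z <;> simp
    rw [hx, hx]

lemma pairRel_equivalence (n k : ℕ) : Equivalence (pairRel n k) := by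
  constructor
  · intro p
    exact ⟨1, by simp [Sym.map_id'], by simp [Sym.map_id']⟩
  · rintro p q ⟨σ, h1, h2⟩
    have hid : (⇑σ⁻¹ ∘ ⇑σ) = id := by funext x; simp
    refine ⟨σ⁻¹, ?_, ?_⟩
    · rw [h1, Sym.map_map, hid, Sym.map_id]
    · rw [h2, Sym.map_map, hid, Sym.map_id]
  · rintro p q r ⟨σ, h1, h2⟩ ⟨τ, h3, h4⟩
    exact ⟨σ * τ, by rw [h1, h3, Sym.map_map]; rfl, by rw [h2, h4, Sym.map_map]; rfl⟩

lemma sym_eq_of_coe_eq {n k : ℕ} {s t : Sym (Fin n) k}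
    (h : (s : Multiset (Fin n)) = (t : Multiset (Fin n))) : s = t := Subtype.ext h

/-- forward direction: `pairRel` implies `lozenge` of the attached setoids. -/
lemma lozenge_of_pairRel {n k : ℕ} {p q : Sym (Fin n) k × Sym (Fin n) k}
    (h : pairRel n k p q) : lozenge k (pairToSetoid p) (pairToSetoid q) := by
  obtain ⟨σ, h1, h2⟩ := h
  have hc1 : Multiset.map (symFun p.1) Finset.univ.val
      = Multiset.map (⇑σ ∘ symFun q.1) Finset.univ.val := by
    rw [map_univ_symFun, h1, ← Multiset.map_map, map_univ_symFun]
    rfl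
  have hc2 : Multiset.map (symFun p.2) Finset.univ.val
      = Multiset.map (⇑σ ∘ symFun q.2) Finset.univ.val := by
    rw [map_univ_symFun, h2, ← Multiset.map_map, map_univ_symFun]
    rfl
  obtain ⟨α, hα⟩ := exists_comp_perm_of_map_univ_eq hc1
  obtain ⟨β, hβ⟩ := exists_comp_perm_of_map_univ_eq hc2
  refine ⟨α, β, fun x y => ?_⟩
  have key : ∀ z : Fin k ⊕ Fin k,
      Sum.elim (symFun p.1) (symFun p.2) z
        = σ (Sum.elim (symFun q.1) (symFun q.2) (Sum.map (⇑α) (⇑β) z)) := by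
    intro z
    cases z with
    | inl a => exact congrFun hα a
    | inr b => exact congrFun hβ b
  rw [pairToSetoid_r, pairToSetoid_r, key x, key y]
  exact ⟨fun hh => σ.injective hh, fun hh => congrArg σ hh⟩

/-- backward direction: `lozenge` of the attached setoids implies `pairRel`. -/
lemma pairRel_of_lozenge {n k : ℕ} {p q : Sym (Fin n) k × Sym (Fin n) k}
    (h : lozenge k (pairToSetoid p) (pairToSetoid q)) : pairRel n k p q := by
  classical
  obtain ⟨α, β, hab⟩ := h
  have hker : ∀ x y : Fin k ⊕ Fin k,
      Sum.elim (symFun p.1) (symFun p.2) x = Sum.elim (symFun p.1) (symFun p.2) y ↔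
      (Sum.elim (symFun q.1) (symFun q.2) ∘ Sum.map (⇑α) (⇑β)) x
        = (Sum.elim (symFun q.1) (symFun q.2) ∘ Sum.map (⇑α) (⇑β)) y := hab
  obtain ⟨σ, hσ⟩ := exists_perm_comp_of_ker _ _ hker
  have hf : symFun p.1 = ⇑σ ∘ symFun q.1 ∘ ⇑α := by
    funext a
    exact congrFun hσ (Sum.inl a)
  have hg : symFun p.2 = ⇑σ ∘ symFun q.2 ∘ ⇑β := by
    funext b
    exact congrFun hσ (Sum.inr b)
  refine ⟨σ, ?_, ?_⟩
  · apply sym_eq_of_coe_eq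
    rw [Sym.coe_map, ← map_univ_symFun p.1, ← map_univ_symFun q.1, hf]
    rw [show (⇑σ ∘ symFun q.1 ∘ ⇑α) = (⇑σ ∘ symFun q.1) ∘ ⇑α from rfl]
    rw [← Multiset.map_map, Multiset.map_univ_val_equiv α, Multiset.map_map]
  · apply sym_eq_of_coe_eq
    rw [Sym.coe_map, ← map_univ_symFun p.2, ← map_univ_symFun q.2, hg]
    rw [show (⇑σ ∘ symFun q.2 ∘ ⇑β) = (⇑σ ∘ symFun q.2) ∘ ⇑β from rfl]
    rw [← Multiset.map_map, Multiset.map_univ_val_equiv β, Multiset.map_map]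

/-- surjectivity: every setoid is `lozenge`-equivalent to one attached to a pair. -/
lemma exists_pair_lozenge {n k : ℕ} (hn : 2 * k ≤ n) (S : Setoid (Fin k ⊕ Fin k)) :
    ∃ p : Sym (Fin n) k × Sym (Fin n) k, lozenge k (pairToSetoid p) S := by
  classical
  have hcard : Fintype.card (Quotient S) ≤ n := by
    calc Fintype.card (Quotient S) ≤ Fintype.card (Fin k ⊕ Fin k) :=
          Fintype.card_le_of_surjective (Quotient.mk S) Quot.exists_rep
      _ = 2 * k := by simp [two_mul]
      _ ≤ n := hn
  obtain ⟨e⟩ : Nonempty (Quotient S ↪ Fin n) := by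
    rw [← Fintype.card_fin n] at hcard
    exact Function.Embedding.nonempty_of_card_le hcard
  set h : Fin k ⊕ Fin k → Fin n := fun x => e (Quotient.mk S x) with hh
  set p : Sym (Fin n) k × Sym (Fin n) k :=
    (⟨Multiset.map (h ∘ Sum.inl) Finset.univ.val, by simp⟩,
     ⟨Multiset.map (h ∘ Sum.inr) Finset.univ.val, by simp⟩) with hp
  refine ⟨p, ?_⟩
  have hc1 : Multiset.map (symFun p.1) Finset.univ.val
      = Multiset.map (h ∘ Sum.inl) Finset.univ.val := map_univ_symFun p.1
  have hc2 : Multiset.map (symFun p.2) Finset.univ.val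
      = Multiset.map (h ∘ Sum.inr) Finset.univ.val := map_univ_symFun p.2
  obtain ⟨α, hα⟩ := exists_comp_perm_of_map_univ_eq hc1
  obtain ⟨β, hβ⟩ := exists_comp_perm_of_map_univ_eq hc2
  refine ⟨α, β, fun x y => ?_⟩
  have key : ∀ z : Fin k ⊕ Fin k,
      Sum.elim (symFun p.1) (symFun p.2) z = h (Sum.map (⇑α) (⇑β) z) := by
    intro z
    cases z with
    | inl a => exact congrFun hα a
    | inr b => exact congrFun hβ b
  rw [pairToSetoid_r, key x, key y]
  constructor
  · intro hxy
    have := e.injective hxy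
    exact Quotient.exact this
  · intro hxy
    exact congrArg e (Quotient.sound hxy)

/-- For `k ≥ 1` and `n ≥ 2k`, the number of `S_n`-orbits on pairs of size-`k`
multisets from `{1,…,n}` equals the number of `◊`-classes of set-partitions of
`{1,…,k} ⊔ {1',…,k'}`. -/
theorem card_orbits_eq_card_lozenge_classes (k n : ℕ) (hk : 1 ≤ k) (hn : 2 * k ≤ n) :
    Nat.card (Quot (pairRel n k)) = Nat.card (Quot (lozenge k)) := by
  have hG : ∀ p q : Sym (Fin n) k × Sym (Fin n) k, pairRel n k p q →
      Quot.mk (lozenge k) (pairToSetoid p) = Quot.mk (lozenge k) (pairToSetoid q) :=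
    fun p q hpq => Quot.sound (lozenge_of_pairRel hpq)
  set G : Quot (pairRel n k) → Quot (lozenge k) :=
    Quot.lift (fun p => Quot.mk (lozenge k) (pairToSetoid p)) hG with hGdef
  have hinj : Function.Injective G := by
    intro a b
    induction a using Quot.ind with | _ p =>
    induction b using Quot.ind with | _ q =>
    intro hab
    have h1 : Quot.mk (lozenge k) (pairToSetoid p) = Quot.mk (lozenge k) (pairToSetoid q) := hab
    rw [Quot.eq, (lozenge_equivalence k).eqvGen_eq] at h1
    exact Quot.sound (pairRel_of_lozenge h1)
  have hsurj : Function.Surjective G := by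
    intro b
    induction b using Quot.ind with | _ S =>
    obtain ⟨p, hp⟩ := exists_pair_lozenge hn S
    exact ⟨Quot.mk _ p, Quot.sound hp⟩
  exact Nat.card_eq_of_bijective G ⟨hinj, hsurj⟩
end

section
/- For every k ≥ 1 and n ≥ 2k, the number of S_n-orbits on pairs of size-k multisets from {1,...,n} (acting simultaneously entrywise) is independent of n. -/
/-!
An embedding `α ↪ β` induces a map from pairs of `k`-multisets in `α` up to relabelling to
those in `β`. It is injective: a permutation of `β` relating two pairs coming from `α` sends
their finite support into the image of `α`, and this partial injection of `α` extends to a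
permutation of `α`. It is surjective as soon as `α` has `2k` points: a pair of `k`-multisets
in `β` has at most `2k` points in its support, and a permutation of `β` moves them into the
image of `α`.
-/

open Function

def symPairRel (α : Type*) (k : ℕ) (p q : Sym α k × Sym α k) : Prop :=
  ∃ σ : Equiv.Perm α, p.1 = Sym.map σ q.1 ∧ p.2 = Sym.map σ q.2

variable {α β : Type*} {k : ℕ}

variable (α k) in
theorem symPairRel_equivalence : Equivalence (symPairRel α k) where
  refl p := ⟨1, by simp [Sym.map_id], by simp [Sym.map_id]⟩
  symm := by
    rintro p q ⟨σ, h₁, h₂⟩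
    refine ⟨σ⁻¹, ?_, ?_⟩ <;> simp [h₁, h₂, Sym.map_map, Sym.map_id']
  trans := by
    rintro p q r ⟨σ, h₁, h₂⟩ ⟨τ, h₃, h₄⟩
    exact ⟨σ * τ, by simp [h₁, h₃, Sym.map_map, comp_def],
      by simp [h₂, h₄, Sym.map_map, comp_def]⟩

theorem Sym.exists_map_eq_of_forall_mem_range {f : α → β} {s : Sym β k}
    (h : ∀ x ∈ s, x ∈ Set.range f) : ∃ t : Sym α k, t.map f = s := by
  choose g hg using fun x : {x // x ∈ s} => h x x.2
  refine ⟨s.attach.map g, ?_⟩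
  conv_rhs => rw [← s.attach_map_coe]
  rw [Sym.map_map]
  exact Sym.map_congr fun x _ => hg x

theorem Equiv.Perm.exists_eqOn_comp_embedding (ι : α ↪ β) (σ : Equiv.Perm β) {S : Set α}
    (hS : S.Finite) (h : ∀ x ∈ S, σ (ι x) ∈ Set.range ι) :
    ∃ τ : Equiv.Perm α, ∀ x ∈ S, ι (τ x) = σ (ι x) := by
  choose g hg using fun x : S => h x x.2
  have : Finite S := hS.to_subtype
  have hg_inj : Injective g := fun x y hxy =>
    Subtype.val_injective <| ι.injective <| σ.injective <| by rw [← hg, ← hg, hxy]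
  obtain ⟨τ, hτ⟩ := Equiv.Perm.exists_extending_pair _ g Subtype.val_injective hg_inj
  exact ⟨τ, fun x hx => by rw [hτ ⟨x, hx⟩, hg]⟩

theorem symPairRel.map_embedding (ι : α ↪ β) {p q : Sym α k × Sym α k}
    (h : symPairRel α k p q) :
    symPairRel β k (p.1.map ι, p.2.map ι) (q.1.map ι, q.2.map ι) := by
  obtain ⟨τ, h₁, h₂⟩ := h
  have hτ (s : Sym α k) : (s.map τ).map ι = (s.map ι).map (τ.viaEmbedding ι) := by
    simp only [Sym.map_map]
    exact Sym.map_congr fun x _ => (τ.viaEmbedding_apply ι x).symm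
  exact ⟨τ.viaEmbedding ι, by rw [h₁, hτ], by rw [h₂, hτ]⟩

theorem symPairRel.of_map_embedding (ι : α ↪ β) {p q : Sym α k × Sym α k}
    (h : symPairRel β k (p.1.map ι, p.2.map ι) (q.1.map ι, q.2.map ι)) :
    symPairRel α k p q := by
  obtain ⟨σ, h₁, h₂⟩ := h
  simp only [Sym.map_map] at h₁ h₂
  have mem_range {s t : Sym α k} (hst : s.map ι = t.map (σ ∘ ι)) (x : α) (hx : x ∈ t) :
      σ (ι x) ∈ Set.range ι := by
    have : σ (ι x) ∈ s.map ι := hst ▸ Sym.mem_map.2 ⟨x, hx, rfl⟩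
    obtain ⟨y, -, hy⟩ := Sym.mem_map.1 this
    exact ⟨y, hy⟩
  obtain ⟨τ, hτ⟩ := σ.exists_eqOn_comp_embedding ι
    ((Multiset.finite_toSet q.1.1).union (Multiset.finite_toSet q.2.1))
    (by rintro x (hx | hx); exacts [mem_range h₁ x hx, mem_range h₂ x hx])
  have eq_map {s t : Sym α k} (hst : s.map ι = t.map (σ ∘ ι))
      (ht : ∀ x ∈ t, ι (τ x) = σ (ι x)) : s = t.map τ := by
    apply Sym.map_injective ι.injective
    rw [hst, Sym.map_map]
    exact Sym.map_congr fun x hx => (ht x hx).symm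
  exact ⟨τ, eq_map h₁ fun x hx => hτ x (Or.inl hx),
    eq_map h₂ fun x hx => hτ x (Or.inr hx)⟩

theorem symPairRel.exists_map_embedding (ι : α ↪ β) (hα : Nonempty (Fin (2 * k) ↪ α))
    (p : Sym β k × Sym β k) :
    ∃ q : Sym α k × Sym α k, symPairRel β k p (q.1.map ι, q.2.map ι) := by
  classical
  set S : Finset β := (p.1 : Multiset β).toFinset ∪ (p.2 : Multiset β).toFinset
  have hS : S.card ≤ 2 * k := calc
    S.card ≤ (p.1 : Multiset β).toFinset.card + (p.2 : Multiset β).toFinset.card :=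
      Finset.card_union_le _ _
    _ ≤ k + k := add_le_add (by simpa using Multiset.toFinset_card_le (p.1 : Multiset β))
      (by simpa using Multiset.toFinset_card_le (p.2 : Multiset β))
    _ = 2 * k := (two_mul k).symm
  obtain ⟨e⟩ := hα
  let u : S ↪ α := S.equivFin.toEmbedding.trans ((Fin.castLEEmb hS).trans e)
  obtain ⟨σ, hσ⟩ := Equiv.Perm.exists_extending_pair _ (ι ∘ u) Subtype.val_injective
    (ι.injective.comp u.injective)
  have lift {s : Sym β k} (hs : ∀ x ∈ s, x ∈ S) : ∃ t : Sym α k, t.map ι = s.map σ := by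
    refine Sym.exists_map_eq_of_forall_mem_range fun y hy => ?_
    obtain ⟨x, hx, rfl⟩ := Sym.mem_map.1 hy
    exact ⟨u ⟨x, hs x hx⟩, (hσ ⟨x, hs x hx⟩).symm⟩
  obtain ⟨t₁, ht₁⟩ := lift fun x hx => Finset.mem_union_left _ (Multiset.mem_toFinset.2 hx)
  obtain ⟨t₂, ht₂⟩ := lift fun x hx => Finset.mem_union_right _ (Multiset.mem_toFinset.2 hx)
  exact ⟨(t₁, t₂), (symPairRel_equivalence β k).symm ⟨σ, ht₁, ht₂⟩⟩

noncomputable def quotSymPairRelEquivOfEmbedding (ι : α ↪ β)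
    (hα : Nonempty (Fin (2 * k) ↪ α)) :
    Quot (symPairRel α k) ≃ Quot (symPairRel β k) :=
  Equiv.ofBijective
    (Quot.map (fun p => (p.1.map ι, p.2.map ι)) fun _ _ => symPairRel.map_embedding ι)
    ⟨by
      rintro ⟨p⟩ ⟨q⟩ h
      exact Quot.sound <| symPairRel.of_map_embedding ι <|
        ((symPairRel_equivalence β k).quot_mk_eq_iff _ _).1 h,
    by
      rintro ⟨p⟩
      obtain ⟨q, hq⟩ := symPairRel.exists_map_embedding ι hα p
      exact ⟨Quot.mk _ q, (Quot.sound hq).symm⟩⟩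

theorem card_quot_symPairRel_eq (hα : Nonempty (Fin (2 * k) ↪ α))
    (hβ : Nonempty (Fin (2 * k) ↪ β)) :
    Nat.card (Quot (symPairRel α k)) = Nat.card (Quot (symPairRel β k)) := by
  rcases Embedding.total α β with ⟨⟨ι⟩⟩ | ⟨⟨ι⟩⟩
  · exact Nat.card_congr (quotSymPairRelEquivOfEmbedding ι hα)
  · exact (Nat.card_congr (quotSymPairRelEquivOfEmbedding ι hβ)).symm

theorem card_orbits_stable_general (k n m : ℕ) (hn : 2 * k ≤ n) (hm : 2 * k ≤ m) :
    Nat.card (Quot (pairRel n k)) = Nat.card (Quot (pairRel m k)) :=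
  card_quot_symPairRel_eq ⟨Fin.castLEEmb hn⟩ ⟨Fin.castLEEmb hm⟩

/-- For `k ≥ 1` and `n, m ≥ 2k`, the number of `S_n`-orbits on pairs of size-`k`
multisets from an `n`-element set is independent of `n`. -/
theorem card_orbits_stable (k n m : ℕ) (hk : 1 ≤ k) (hn : 2 * k ≤ n) (hm : 2 * k ≤ m) :
    Nat.card (Quot (pairRel n k)) = Nat.card (Quot (pairRel m k)) :=
  card_orbits_stable_general k n m hn hm
end

section
/- For 2k ≤ n, the dimension of End_{S_n}(Sym^k(ℂⁿ)) is strictly less than the dimension of End_{S_n}((ℂⁿ)^{⊗k}), for all k ≥ 2. -/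
/-- Model of the tensor power `(ℂⁿ)^{⊗k}`: the free ℂ-module on the basis indexed
by `k`-tuples of indices in `{1,…,n}`. -/
abbrev TenV (n k : ℕ) : Type := (Fin k → Fin n) → ℂ

/-- The diagonal action of `σ ∈ S_n` on `(ℂⁿ)^{⊗k}`: the linear map sending the
basis vector indexed by `f` to the one indexed by `σ ∘ f`. -/
noncomputable def tenAct (n k : ℕ) (σ : Equiv.Perm (Fin n)) : Module.End ℂ (TenV n k) :=
  LinearMap.funLeft ℂ ℂ (fun f => ⇑σ⁻¹ ∘ f)

/-- The centralizer algebra `End_{S_n}((ℂⁿ)^{⊗k})` (for `2k ≤ n`, the partition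
algebra of order `k`). -/
noncomputable def centAlgTen (n k : ℕ) : Subalgebra ℂ (Module.End ℂ (TenV n k)) :=
  Subalgebra.centralizer ℂ (Set.range (tenAct n k))

open Finset Function

def funLeftCentralizer (K : Type*) [Field K] {X ι : Type*} (a : ι → X → X) :
    Subalgebra K (Module.End K (X → K)) :=
  Subalgebra.centralizer K (Set.range fun i => LinearMap.funLeft K K (a i))

theorem injective_of_surjective_funLeft {K X Y : Type*} [Field K] {π : X → Y}
    (h : Surjective (LinearMap.funLeft K K π)) : Injective π := by
  classical
  intro x x' hxx'
  by_contra hne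
  obtain ⟨g, hg⟩ := h (Pi.single x 1)
  have hx := congrFun hg x
  have hx' := congrFun hg x'
  simp only [LinearMap.funLeft_apply, hxx', Pi.single_eq_same, Pi.single_eq_of_ne' hne] at hx hx'
  exact one_ne_zero (hx.symm.trans hx')

section FiberAverage

variable {K X Y : Type*} [Field K] [Fintype X] [DecidableEq Y]

def fiberAverage (π : X → Y) : (X → K) →ₗ[K] (Y → K) where
  toFun f y := (#{x | π x = y} : K)⁻¹ * ∑ x with π x = y, f x
  map_add' f g := by funext y; simp [sum_add_distrib, mul_add]
  map_smul' c f := by funext y; simp [mul_sum, mul_left_comm]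

theorem fiberAverage_apply (π : X → Y) (f : X → K) (y : Y) :
    fiberAverage π f y = (#{x | π x = y} : K)⁻¹ * ∑ x with π x = y, f x :=
  rfl

theorem fiberAverage_comp_funLeft [CharZero K] {π : X → Y} (hπ : Surjective π) :
    fiberAverage π ∘ₗ LinearMap.funLeft K K π = LinearMap.id := by
  ext g y
  obtain ⟨x, rfl⟩ := hπ y
  have hcard : (#{x' | π x' = π x} : K) ≠ 0 :=
    Nat.cast_ne_zero.2 (card_ne_zero_of_mem (mem_filter.2 ⟨mem_univ x, rfl⟩))
  simp only [LinearMap.comp_apply, fiberAverage_apply, LinearMap.funLeft_apply, LinearMap.id_apply]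
  rw [sum_congr rfl fun x' hx' => by rw [(mem_filter.1 hx').2], sum_const, nsmul_eq_mul,
    inv_mul_cancel_left₀ hcard]

theorem filter_eq_map_of_semiconj {π : X → Y} {a : X → X} {b : Y → Y} (ha : Injective a)
    (hb : Injective b) (hab : π ∘ a = b ∘ π) (y : Y) :
    ({x | π x = b y} : Finset X) = ({x | π x = y} : Finset X).map ⟨a, ha⟩ := by
  ext x'
  obtain ⟨x, rfl⟩ := Finite.surjective_of_injective ha x'
  have hx : π (a x) = b (π x) := congrFun hab x
  simp only [mem_filter, mem_univ, true_and, mem_map, Embedding.coeFn_mk, ha.eq_iff,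
    exists_eq_right, hx, hb.eq_iff]

theorem fiberAverage_comp_funLeft_of_semiconj {π : X → Y} {a : X → X} {b : Y → Y}
    (ha : Injective a) (hb : Injective b) (hab : π ∘ a = b ∘ π) :
    fiberAverage π ∘ₗ LinearMap.funLeft K K a = LinearMap.funLeft K K b ∘ₗ fiberAverage π := by
  ext f y
  simp only [LinearMap.comp_apply, fiberAverage_apply, LinearMap.funLeft_apply,
    filter_eq_map_of_semiconj ha hb hab, card_map, sum_map, Embedding.coeFn_mk]

def liftEnd (π : X → Y) : Module.End K (Y → K) →ₗ[K] Module.End K (X → K) :=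
  LinearMap.compRight K (LinearMap.funLeft K K π) ∘ₗ LinearMap.lcomp K (Y → K) (fiberAverage π)

theorem liftEnd_apply (π : X → Y) (e : Module.End K (Y → K)) :
    liftEnd π e = LinearMap.funLeft K K π ∘ₗ e ∘ₗ fiberAverage π :=
  rfl

theorem liftEnd_injective [CharZero K] {π : X → Y} (hπ : Surjective π) :
    Injective (liftEnd (K := K) π) := by
  intro e e' h
  have h' : LinearMap.funLeft K K π ∘ₗ e = LinearMap.funLeft K K π ∘ₗ e' := by
    simpa [liftEnd_apply, LinearMap.comp_assoc, fiberAverage_comp_funLeft hπ] using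
      congrArg (· ∘ₗ LinearMap.funLeft K K π) h
  exact LinearMap.ext fun g =>
    LinearMap.funLeft_injective_of_surjective K K π hπ (LinearMap.congr_fun h' g)

theorem liftEnd_mem_funLeftCentralizer {ι : Type*} {π : X → Y} {a : ι → X → X} {b : ι → Y → Y}
    (ha : ∀ i, Injective (a i)) (hb : ∀ i, Injective (b i)) (hab : ∀ i, π ∘ a i = b i ∘ π)
    {e : Module.End K (Y → K)} (he : e ∈ funLeftCentralizer K b) :
    liftEnd π e ∈ funLeftCentralizer K a := by
  rintro _ ⟨i, rfl⟩
  have he_i : LinearMap.funLeft K K (b i) * e = e * LinearMap.funLeft K K (b i) :=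
    he _ ⟨i, rfl⟩
  simp only [Module.End.mul_eq_comp, liftEnd_apply] at he_i ⊢
  calc LinearMap.funLeft K K (a i) ∘ₗ LinearMap.funLeft K K π ∘ₗ e ∘ₗ fiberAverage π
      = LinearMap.funLeft K K (b i ∘ π) ∘ₗ e ∘ₗ fiberAverage π := by
        rw [← hab i, LinearMap.funLeft_comp, LinearMap.comp_assoc]
    _ = LinearMap.funLeft K K π ∘ₗ (LinearMap.funLeft K K (b i) ∘ₗ e) ∘ₗ fiberAverage π := by
        rw [LinearMap.funLeft_comp]; simp only [LinearMap.comp_assoc]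
    _ = LinearMap.funLeft K K π ∘ₗ e ∘ₗ LinearMap.funLeft K K (b i) ∘ₗ fiberAverage π := by
        rw [he_i, LinearMap.comp_assoc]
    _ = (LinearMap.funLeft K K π ∘ₗ e ∘ₗ fiberAverage π) ∘ₗ LinearMap.funLeft K K (a i) := by
        rw [← fiberAverage_comp_funLeft_of_semiconj (ha i) (hb i) (hab i)]
        simp only [LinearMap.comp_assoc]

theorem one_notMem_range_liftEnd {π : X → Y} (hπ : ¬ Injective π) :
    (1 : Module.End K (X → K)) ∉ LinearMap.range (liftEnd π) := by
  rintro ⟨e, he⟩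
  exact hπ (injective_of_surjective_funLeft (K := K) fun f => ⟨_, LinearMap.congr_fun he f⟩)

end FiberAverage

theorem finrank_funLeftCentralizer_lt {K X Y ι : Type*} [Field K] [CharZero K] [Fintype X]
    {π : X → Y} {a : ι → X → X} {b : ι → Y → Y} (ha : ∀ i, Injective (a i))
    (hb : ∀ i, Injective (b i)) (hab : ∀ i, π ∘ a i = b i ∘ π) (hπ : Surjective π)
    (hπ' : ¬ Injective π) :
    Module.finrank K (funLeftCentralizer K b) < Module.finrank K (funLeftCentralizer K a) := by
  classical
  let C := Subalgebra.toSubmodule (funLeftCentralizer K a)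
  let M := (Subalgebra.toSubmodule (funLeftCentralizer K b)).map (liftEnd (K := K) π)
  have hle : M ≤ C := by
    rintro _ ⟨e, he, rfl⟩
    exact liftEnd_mem_funLeftCentralizer ha hb hab he
  have hone : (1 : Module.End K (X → K)) ∈ C := (funLeftCentralizer K a).one_mem
  have hlt : M < C := lt_of_le_of_ne hle fun h =>
    one_notMem_range_liftEnd hπ' (LinearMap.map_le_range (h ▸ hone))
  calc Module.finrank K (funLeftCentralizer K b) = Module.finrank K M :=
        (Submodule.equivMapOfInjective _ (liftEnd_injective hπ)
          (Subalgebra.toSubmodule (funLeftCentralizer K b))).finrank_eq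
    _ < Module.finrank K (funLeftCentralizer K a) := Submodule.finrank_lt_finrank_of_lt hlt

namespace Sym

variable {α β : Type*} {k : ℕ}

def ofFn (w : Fin k → α) : Sym α k :=
  ⟨List.ofFn w, by simp⟩

theorem ofFn_comp (f : α → β) (w : Fin k → α) : ofFn (f ∘ w) = (ofFn w).map f :=
  Subtype.ext <| by simp [ofFn, ← List.map_ofFn]

theorem ofFn_comp_perm (w : Fin k → α) (τ : Equiv.Perm (Fin k)) : ofFn (w ∘ τ) = ofFn w :=
  Subtype.ext <| Multiset.coe_eq_coe.2 (τ.ofFn_comp_perm w)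

theorem ofFn_surjective : Surjective (ofFn : (Fin k → α) → Sym α k) := by
  rintro ⟨s, hs⟩
  induction s using Quotient.inductionOn with
  | h l =>
    obtain rfl : l.length = k := hs
    exact ⟨l.get, Subtype.ext <| by simp [ofFn, List.ofFn_get]⟩

theorem ofFn_not_injective [Nontrivial α] (hk : 2 ≤ k) :
    ¬ Injective (ofFn : (Fin k → α) → Sym α k) := by
  obtain ⟨x, y, hxy⟩ := exists_pair_ne α
  let i₀ : Fin k := ⟨0, by omega⟩
  let i₁ : Fin k := ⟨1, by omega⟩
  have hi : i₁ ≠ i₀ := by simp [i₀, i₁, Fin.ext_iff]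
  let w : Fin k → α := update (fun _ => y) i₀ x
  intro hinj
  have h := congrFun (hinj (ofFn_comp_perm w (Equiv.swap i₀ i₁))) i₀
  simp only [w, comp_apply, Equiv.swap_apply_left, update_of_ne hi, update_self] at h
  exact hxy h.symm

end Sym

/-- For `k ≥ 2` and `2k ≤ n`, the dimension of `End_{S_n}(Sym^k(ℂⁿ))` is strictly
less than that of `End_{S_n}((ℂⁿ)^{⊗k})`. -/
theorem finrank_centAlg_lt_finrank_centAlgTen (n k : ℕ) (hk : 2 ≤ k) (h : 2 * k ≤ n) :
    Module.finrank ℂ (centAlg n k) < Module.finrank ℂ (centAlgTen n k) := by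
  have : Nontrivial (Fin n) := Fin.nontrivial_iff_two_le.2 (by omega)
  exact finrank_funLeftCentralizer_lt (ι := Equiv.Perm (Fin n)) (π := Sym.ofFn)
    (a := fun σ w => ⇑σ⁻¹ ∘ w) (b := fun σ => Sym.map ⇑σ⁻¹) (fun σ => σ⁻¹.injective.comp_left)
    (fun σ => Sym.map_injective σ⁻¹.injective k) (fun σ => funext (Sym.ofFn_comp _))
    Sym.ofFn_surjective (Sym.ofFn_not_injective hk)
end
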